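/- For every positive integer β and distinct positive integers x_1,...,x_n, we have d_{x_1+β+n}···d_{x_n+β+n} · [(β−1)!·β!···(β+n−2)!] / [(x_1+2)_{β+n−1}···(x_n+2)_{β+n−1}] · ∏_{1≤i<j≤n}|x_j−x_i| ≥ 1, where d_m = lcm(1,...,m). -/

import Mathlib

/-!
Write `β = s + 1`. The quantity is `|det B|` for the integer matrix
`B i j = s! d_{x_i+β+n} / (x_i + 2 + j)_β`. Its entries are integers because, as in the partial
fraction expansion of `s!/(k)_{s+1}`, the denominator `(k)_{s+1}` divides `s! L` as soon as each
of `k, …, k + s` divides `L`. Taking `s! d_{x_i+β+n}/(y_i)_{β+n-1}`, `y_i = x_i + 2`, out of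
row `i` leaves the matrix `(y_i)_j (y_i + j + β)_{n-1-j}`. By Chu–Vandermonde this is the product
of the matrix `((y_i)_k)`, whose determinant is the Vandermonde determinant since `(X)_k` is monic
of degree `k`, and a lower triangular matrix with diagonal `(β)_{n-1-k}`. So `det B` is, up to
sign, the quantity; it is nonzero for distinct `x_i`, and a nonzero integer has absolute value at
least `1`.
-/

/-- `d_m` denotes `lcm(1,…,m)`. -/
def dlcm (m : ℕ) : ℕ := (Finset.Icc 1 m).lcm id

open Finset Polynomial Matrix
open scoped Nat

variable {n : ℕ}

section Pochhammer

variable {R : Type*} [CommRing R]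

-- Chu–Vandermonde, from the falling-factorial `Ring.descPochhammer_smeval_add`
-- via `(r)_k = (-1)^k (-r)^(k)`.
theorem ascPochhammer_eval_add (r s : R) (k : ℕ) :
    (ascPochhammer R k).eval (r + s) = ∑ l ∈ range (k + 1),
      k.choose l * ((ascPochhammer R l).eval r * (ascPochhammer R (k - l)).eval s) := by
  have hsm (m : ℕ) (t : R) : (descPochhammer ℤ m).smeval t = (descPochhammer R m).eval t := by
    rw [← aeval_eq_smeval, aeval_def, ← eval_map, descPochhammer_map]
  have h := Ring.descPochhammer_smeval_add k (Commute.all (-r) (-s))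
  simp only [hsm, Nat.sum_antidiagonal_eq_sum_range_succ_mk] at h
  rw [← neg_neg (r + s), ascPochhammer_eval_neg_eq_descPochhammer, neg_add, h, mul_sum]
  refine sum_congr rfl fun l hl => ?_
  rw [← neg_neg r, ← neg_neg s, ascPochhammer_eval_neg_eq_descPochhammer,
    ascPochhammer_eval_neg_eq_descPochhammer, neg_neg, neg_neg]
  nth_rw 1 [← Nat.add_sub_cancel' (mem_range_succ_iff.mp hl)]
  ring

theorem ascPochhammer_mul_eval (y : R) (j l : ℕ) :
    (ascPochhammer R j).eval y * (ascPochhammer R l).eval (y + j) =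
      (ascPochhammer R (j + l)).eval y := by
  rw [← ascPochhammer_mul, eval_mul, eval_comp, eval_add, eval_X, eval_natCast]

theorem ascPochhammer_mul_eval_add_eq_sum (y b : R) (j m : ℕ) :
    (ascPochhammer R j).eval y * (ascPochhammer R m).eval (y + j + b) =
      ∑ l ∈ range (m + 1),
        m.choose l * ((ascPochhammer R (j + l)).eval y * (ascPochhammer R (m - l)).eval b) := by
  rw [ascPochhammer_eval_add, mul_sum]
  refine sum_congr rfl fun l _ => ?_
  rw [← ascPochhammer_mul_eval]
  ring

noncomputable def ascPochhammerMatrix (y : Fin n → R) : Matrix (Fin n) (Fin n) R :=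
  of fun i j => (ascPochhammer R j).eval (y i)

noncomputable def chuVandermondeMatrix (n : ℕ) (b : R) : Matrix (Fin n) (Fin n) R :=
  of fun k j => if (j : ℕ) ≤ k then
    ((n - 1 - j).choose (k - j) : R) * (ascPochhammer R (n - 1 - k)).eval b else 0

theorem det_ascPochhammerMatrix [IsDomain R] (y : Fin n → R) :
    (ascPochhammerMatrix y).det = (vandermonde y).det :=
  (det_eval_matrixOfPolynomials_eq_det_vandermonde y (fun j => ascPochhammer R j)
    (fun j => ascPochhammer_natDegree R j) (fun j => monic_ascPochhammer R j)).symm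

theorem det_chuVandermondeMatrix (b : R) :
    (chuVandermondeMatrix n b).det = ∏ k ∈ range n, (ascPochhammer R k).eval b := by
  have htri : (chuVandermondeMatrix n b).IsLowerTriangular := fun k j hkj =>
    if_neg (not_le.mpr (Fin.lt_def.mp hkj))
  rw [det_of_isLowerTriangular _ htri, ← prod_range_reflect, ← Fin.prod_univ_eq_prod_range]
  simp [chuVandermondeMatrix]

-- For `b = β ∈ ℕ`, entry `(i, j)` is `(y i)_{n-1+β}` with the block `(y i + j)_β` left out.
noncomputable def gappedAscPochhammerMatrix (y : Fin n → R) (b : R) :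
    Matrix (Fin n) (Fin n) R :=
  of fun i j => (ascPochhammer R j).eval (y i) * (ascPochhammer R (n - 1 - j)).eval (y i + j + b)

theorem ascPochhammerMatrix_mul_chuVandermondeMatrix (y : Fin n → R) (b : R) :
    ascPochhammerMatrix y * chuVandermondeMatrix n b = gappedAscPochhammerMatrix y b := by
  ext i j
  rw [gappedAscPochhammerMatrix, of_apply, ascPochhammer_mul_eval_add_eq_sum, mul_apply]
  simp only [ascPochhammerMatrix, chuVandermondeMatrix, of_apply]
  rw [Fin.sum_univ_eq_sum_range (fun k => (ascPochhammer R k).eval (y i) *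
    if (j : ℕ) ≤ k then ((n - 1 - j).choose (k - j) : R) * (ascPochhammer R (n - 1 - k)).eval b
    else 0), show range n = range (j + (n - 1 - j + 1)) by congr 1; omega, sum_range_add,
    sum_eq_zero fun k hk => by rw [if_neg (by simpa using hk), mul_zero], zero_add]
  refine sum_congr rfl fun l hl => ?_
  rw [if_pos (Nat.le_add_right _ _), Nat.add_sub_cancel_left,
    show n - 1 - (j + l) = n - 1 - j - l by omega]
  ring

theorem det_gappedAscPochhammerMatrix [IsDomain R] (y : Fin n → R) (b : R) :
    (gappedAscPochhammerMatrix y b).det =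
      (vandermonde y).det * ∏ k ∈ range n, (ascPochhammer R k).eval b := by
  rw [← ascPochhammerMatrix_mul_chuVandermondeMatrix, det_mul, det_ascPochhammerMatrix,
    det_chuVandermondeMatrix]

end Pochhammer

theorem dlcm_pos (m : ℕ) : 0 < dlcm m :=
  Nat.pos_of_ne_zero fun h => by simpa using Finset.lcm_eq_zero_iff.mp h

theorem dvd_dlcm {k m : ℕ} (hk : 0 < k) (hkm : k ≤ m) : k ∣ dlcm m :=
  Finset.dvd_lcm (mem_Icc.mpr ⟨hk, hkm⟩)

-- `(s + 1)! L = (k + s + 1) s! L - k s! L`,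
-- and `(k)_{s+2} = (k + s + 1) (k)_{s+1} = k (k + 1)_{s+1}`.
theorem ascFactorial_succ_dvd_factorial_mul {k s L : ℕ} (hL : ∀ j ≤ s, k + j ∣ L) :
    k.ascFactorial (s + 1) ∣ s ! * L := by
  induction s generalizing k with
  | zero => simpa [Nat.ascFactorial_succ] using hL 0 le_rfl
  | succ s ih =>
    obtain ⟨a, ha⟩ := ih fun j hj => hL j (by omega)
    obtain ⟨b, hb⟩ := ih (k := k + 1) fun j hj => by
      simpa [add_assoc, add_comm 1] using hL (j + 1) (by omega)
    have hsplit : (s + 1)! * L = (k + (s + 1)) * (s ! * L) - k * (s ! * L) := by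
      rw [← Nat.sub_mul, Nat.add_sub_cancel_left, Nat.factorial_succ, mul_assoc]
    rw [hsplit]
    refine Nat.dvd_sub (Dvd.intro a ?_) (Dvd.intro b ?_)
    · rw [Nat.ascFactorial_succ, ha, mul_assoc]
    · rw [hb, ← mul_assoc, Nat.succ_ascFactorial, Nat.ascFactorial_succ]

-- The ℕ-division is exact by `ascFactorial_succ_dvd_factorial_mul`.
def extrapolationMatrix (s : ℕ) (x : Fin n → ℕ) : Matrix (Fin n) (Fin n) ℤ :=
  of fun i j => ((s ! * dlcm (x i + (s + 1) + n) / (x i + 2 + j).ascFactorial (s + 1) : ℕ) : ℤ)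

theorem cast_extrapolationMatrix_apply (s : ℕ) (x : Fin n → ℕ) (i j : Fin n) :
    (extrapolationMatrix s x i j : ℚ) =
      (s ! * dlcm (x i + (s + 1) + n) : ℚ) / (x i + 2).ascFactorial (s + n) *
        gappedAscPochhammerMatrix (fun i => ((x i + 2 : ℕ) : ℚ)) (s + 1 : ℕ) i j := by
  have hdvd : (x i + 2 + j).ascFactorial (s + 1) ∣ s ! * dlcm (x i + (s + 1) + n) :=
    ascFactorial_succ_dvd_factorial_mul fun t ht => dvd_dlcm (by omega) (by omega)
  have hsplit : (x i + 2).ascFactorial (s + n) = (x i + 2).ascFactorial j *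
      (x i + 2 + j).ascFactorial (s + 1) * (x i + 2 + j + (s + 1)).ascFactorial (n - 1 - j) := by
    rw [Nat.ascFactorial_mul_ascFactorial, add_assoc (x i + 2),
      Nat.ascFactorial_mul_ascFactorial]
    congr 1
    omega
  have hne {a : ℕ} (k : ℕ) (ha : 0 < a) : (a.ascFactorial k : ℚ) ≠ 0 := by
    obtain ⟨b, rfl⟩ := Nat.exists_eq_succ_of_ne_zero ha.ne'
    positivity
  rw [gappedAscPochhammerMatrix, of_apply,
    show ((x i + 2 : ℕ) : ℚ) + j + (s + 1 : ℕ) = (x i + 2 + j + (s + 1) : ℕ) by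
      push_cast; rfl,
    ← Nat.cast_ascFactorial, ← Nat.cast_ascFactorial, extrapolationMatrix, of_apply,
    Int.cast_natCast, Nat.cast_div hdvd (hne _ (by omega)), hsplit]
  have := hne (a := x i + 2) j (by omega)
  have := hne (a := x i + 2 + j + (s + 1)) (n - 1 - j) (by omega)
  push_cast
  field_simp

theorem prod_range_factorial_add (s n : ℕ) :
    ∏ j ∈ range n, (s + j)! = s ! ^ n * ∏ j ∈ range n, (s + 1).ascFactorial j := by
  simp only [← Nat.factorial_mul_ascFactorial, prod_mul_distrib, prod_const, card_range]

theorem det_extrapolationMatrix (s : ℕ) (x : Fin n → ℕ) :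
    ((extrapolationMatrix s x).det : ℚ) =
      (∏ i, (dlcm (x i + (s + 1) + n) : ℚ)) *
        ((∏ j ∈ range n, ((s + j)! : ℚ)) / ∏ i, ((x i + 2).ascFactorial (s + n) : ℚ)) *
        (vandermonde fun i => (x i : ℚ)).det := by
  have hcast : (extrapolationMatrix s x).map (Int.cast : ℤ → ℚ) =
      of fun i j => (s ! * dlcm (x i + (s + 1) + n) : ℚ) / (x i + 2).ascFactorial (s + n) *
        gappedAscPochhammerMatrix (fun i => ((x i + 2 : ℕ) : ℚ)) (s + 1 : ℕ) i j := by
    ext i j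
    exact cast_extrapolationMatrix_apply s x i j
  have hshift : (vandermonde fun i => ((x i + 2 : ℕ) : ℚ)).det =
      (vandermonde fun i => (x i : ℚ)).det := by
    push_cast
    exact det_vandermonde_add _ 2
  rw [Int.cast_det, hcast, det_mul_column, det_gappedAscPochhammerMatrix, hshift]
  have hfac := congrArg (Nat.cast : ℕ → ℚ) (prod_range_factorial_add s n)
  push_cast at hfac
  rw [hfac]
  simp only [← Nat.cast_ascFactorial, prod_div_distrib, prod_mul_distrib, prod_const,
    Finset.card_fin]
  ring

theorem general_extrapolation_general (n β : ℕ) (hβ : 0 < β) (x : Fin n → ℕ)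
    (hinj : Function.Injective x) :
    1 ≤ (∏ i : Fin n, (dlcm (x i + β + n) : ℚ)) *
        ((∏ j ∈ Finset.range n, ((β + j - 1).factorial : ℚ)) /
          (∏ i : Fin n, (Nat.ascFactorial (x i + 2) (β + n - 1) : ℚ))) *
        ∏ i : Fin n, ∏ j ∈ Finset.Ioi i, |(x j : ℚ) - (x i : ℚ)| := by
  obtain ⟨s, rfl⟩ : ∃ s, β = s + 1 := ⟨β - 1, by omega⟩
  simp only [Nat.add_right_comm s 1, Nat.add_sub_cancel]
  have hL : 0 < ∏ i, (dlcm (x i + (s + 1) + n) : ℚ) :=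
    prod_pos fun i _ => by exact_mod_cast dlcm_pos _
  have hF :
      0 < (∏ j ∈ range n, ((s + j)! : ℚ)) / ∏ i, ((x i + 2).ascFactorial (s + n) : ℚ) :=
    by positivity
  have hV : (vandermonde fun i => (x i : ℚ)).det ≠ 0 :=
    det_vandermonde_ne_zero_iff.mpr (Nat.cast_injective.comp hinj)
  have hne : (extrapolationMatrix s x).det ≠ 0 := by
    rw [← Int.cast_ne_zero (α := ℚ), det_extrapolationMatrix]
    exact mul_ne_zero (mul_pos hL hF).ne' hV
  calc (1 : ℚ) ≤ |((extrapolationMatrix s x).det : ℚ)| := by exact_mod_cast Int.one_le_abs hne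
    _ = _ := by
      rw [det_extrapolationMatrix, abs_mul, abs_of_pos (mul_pos hL hF), det_vandermonde, abs_prod]
      simp only [abs_prod]

/-- For a positive integer β and distinct positive integers `x_1,…,x_n`,
`d_{x_1+β+n}⋯d_{x_n+β+n} · [(β−1)!β!⋯(β+n−2)!]/[(x_1+2)_{β+n−1}⋯(x_n+2)_{β+n−1}]
  · ∏_{i<j}|x_j−x_i| ≥ 1`. -/
theorem general_extrapolation (n β : ℕ) (hβ : 0 < β) (x : Fin n → ℕ)
    (hx : ∀ i, 0 < x i) (hinj : Function.Injective x) :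
    1 ≤ (∏ i : Fin n, (dlcm (x i + β + n) : ℚ)) *
        ((∏ j ∈ Finset.range n, ((β + j - 1).factorial : ℚ)) /
          (∏ i : Fin n, (Nat.ascFactorial (x i + 2) (β + n - 1) : ℚ))) *
        ∏ i : Fin n, ∏ j ∈ Finset.Ioi i, |(x j : ℚ) - (x i : ℚ)| :=
  general_extrapolation_general n β hβ x hinj
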